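/- Let P(m,t) = (−1/2 + m/(cos t + 1) + (m−1)cos t, (1−m)sin t, m√(2cos t + 1)/(cos t + 1)) for m ∈ [0,1] and t ∈ (−2π/3, 2π/3). Then the Euclidean norm of the cross product of the partial derivatives satisfies ‖(∂P/∂m) × (∂P/∂t)‖ = ((2−3m)cos t + 1) / (cos(t/2)·√(2cos t + 1)). -/

import Mathlib

/-!
With `c = cos t`, `s = sin t` and `q = √(2c + 1)`, the cross product `∂P/∂m × ∂P/∂t` is the
multiple `((2 - 3m)c + 1) / ((c + 1) q)` of the vector `(-c, s, q)`, whose length is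
`√(2 + 2c) = 2 cos (t/2)`. Since `c + 1 = 2 cos² (t/2)`, the formula follows.
-/

open Real Matrix

/-- Parametrization of the upper sheet of the oloid surface. -/
noncomputable def oloidP (m t : ℝ) : Fin 3 → ℝ :=
  ![-1/2 + m / (Real.cos t + 1) + (m - 1) * Real.cos t,
    (1 - m) * Real.sin t,
    m * Real.sqrt (2 * Real.cos t + 1) / (Real.cos t + 1)]

/-- Euclidean norm of a vector in `Fin 3 → ℝ`. -/
noncomputable def euclNorm (v : Fin 3 → ℝ) : ℝ :=
  ‖((WithLp.equiv 2 (Fin 3 → ℝ)).symm v : EuclideanSpace ℝ (Fin 3))‖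

open Set

lemma euclNorm_smul (r : ℝ) (v : Fin 3 → ℝ) : euclNorm (r • v) = |r| * euclNorm v := by
  simp [euclNorm, norm_smul]

lemma euclNorm_eq_sqrt (v : Fin 3 → ℝ) : euclNorm v = √(v 0 ^ 2 + v 1 ^ 2 + v 2 ^ 2) := by
  simp [euclNorm, EuclideanSpace.norm_eq, Fin.sum_univ_three, sq_abs]

lemma neg_half_lt_cos_of_mem_Ioo {t : ℝ} (ht : t ∈ Ioo (-(2 * π / 3)) (2 * π / 3)) :
    -(1 / 2) < cos t := by
  have hcos : cos (2 * π / 3) = -(1 / 2) := by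
    rw [show 2 * π / 3 = π - π / 3 by ring, cos_pi_sub, cos_pi_div_three]
  calc -(1 / 2) = cos (2 * π / 3) := hcos.symm
    _ < cos |t| := cos_lt_cos_of_nonneg_of_le_pi (abs_nonneg t) (by linarith [pi_pos])
        (abs_lt.2 ht)
    _ = cos t := cos_abs t

lemma hasDerivAt_oloidP_m (m t : ℝ) :
    HasDerivAt (fun m' => oloidP m' t)
      ![1 / (cos t + 1) + cos t, -sin t, √(2 * cos t + 1) / (cos t + 1)] m := by
  set v : Fin 3 → ℝ := ![1 / (cos t + 1) + cos t, -sin t, √(2 * cos t + 1) / (cos t + 1)]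
  have haffine : (fun m' => oloidP m' t) = fun m' => oloidP 0 t + m' • v := by
    ext m' i
    fin_cases i <;>
      simp only [oloidP, v, Pi.add_apply, Pi.smul_apply, smul_eq_mul, Fin.isValue, Fin.zero_eta,
        Fin.mk_one, Fin.reduceFinMk, Matrix.cons_val] <;> ring
  rw [haffine]
  simpa using ((hasDerivAt_id m).smul_const v).const_add (oloidP 0 t)

lemma hasDerivAt_oloidP_t (m : ℝ) {t : ℝ} (hc : -(1 / 2) < cos t) :
    HasDerivAt (fun t' => oloidP m t')
      ![m * sin t / (cos t + 1) ^ 2 - (m - 1) * sin t, (1 - m) * cos t,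
        m * sin t * cos t / (√(2 * cos t + 1) * (cos t + 1) ^ 2)] t := by
  have hc1 : cos t + 1 ≠ 0 := by linarith
  have h2c : 0 < 2 * cos t + 1 := by linarith
  have hq : √(2 * cos t + 1) ≠ 0 := (sqrt_pos.2 h2c).ne'
  have hden : HasDerivAt (fun t' => cos t' + 1) (-sin t) t := (hasDerivAt_cos t).add_const 1
  rw [hasDerivAt_pi]
  intro i
  fin_cases i <;>
    simp only [oloidP, Fin.isValue, Fin.zero_eta, Fin.mk_one, Fin.reduceFinMk, Matrix.cons_val]
  · exact ((((hasDerivAt_const t m).div hden hc1).const_add (-1 / 2)).add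
      ((hasDerivAt_cos t).const_mul (m - 1))).congr_deriv (by field_simp; ring)
  · exact (hasDerivAt_sin t).const_mul (1 - m)
  · have hsqrt := (((hasDerivAt_cos t).const_mul 2).add_const 1).sqrt h2c.ne'
    refine ((hsqrt.const_mul m).div hden hc1).congr_deriv ?_
    field_simp
    linear_combination m * sin t * sq_sqrt h2c.le

/-- The two factors are `∂P/∂m` and `∂P/∂t`, written in `c = cos t`, `s = sin t`,
`q = √(2 cos t + 1)`. -/
lemma cross_oloid_partials_eq_smul (m c s q : ℝ) (hsc : s ^ 2 + c ^ 2 = 1)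
    (hq : q ^ 2 = 2 * c + 1) (hc : c + 1 ≠ 0) (hq0 : q ≠ 0) :
    ![1 / (c + 1) + c, -s, q / (c + 1)] ⨯₃
        ![m * s / (c + 1) ^ 2 - (m - 1) * s, (1 - m) * c, m * s * c / (q * (c + 1) ^ 2)] =
      (((2 - 3 * m) * c + 1) / ((c + 1) * q)) • ![-c, s, q] := by
  ext i
  fin_cases i <;>
    simp only [cross_apply, Pi.smul_apply, smul_eq_mul, Fin.isValue, Fin.zero_eta, Fin.mk_one,
      Fin.reduceFinMk, Matrix.cons_val] <;> field_simp
  · linear_combination (-c * m) * hsc + c * (m - 1) * (c + 1) * hq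
  · linear_combination s * (1 + 2 * c + c ^ 2 - 2 * c * m - c ^ 2 * m) * hq
  · linear_combination (1 + 2 * c + c ^ 2 - 2 * c * m - c ^ 2 * m) * hsc

lemma euclNorm_neg_cos_sin_sqrt {t : ℝ} (hl : -π ≤ t) (hr : t ≤ π) (h : 0 ≤ 2 * cos t + 1) :
    euclNorm ![-cos t, sin t, √(2 * cos t + 1)] = 2 * cos (t / 2) := by
  rw [euclNorm_eq_sqrt, cos_half hl hr]
  simp only [Fin.isValue, Matrix.cons_val, neg_sq, sq_sqrt h]
  calc √(cos t ^ 2 + sin t ^ 2 + (2 * cos t + 1)) = √(2 ^ 2 * ((1 + cos t) / 2)) := by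
        congr 1; linear_combination sin_sq_add_cos_sq t
    _ = 2 * √((1 + cos t) / 2) := by rw [sqrt_mul (by norm_num), sqrt_sq (by norm_num)]

theorem oloid_norm_cross_product_of_partials :
    ∀ m ∈ Set.Icc (0:ℝ) 1, ∀ t ∈ Set.Ioo (-(2*π/3)) (2*π/3),
      euclNorm ((deriv (fun m' => oloidP m' t) m) ⨯₃ (deriv (fun t' => oloidP m t') t)) =
        ((2 - 3*m) * Real.cos t + 1) / (Real.cos (t/2) * Real.sqrt (2 * Real.cos t + 1)) := by
  intro m hm t ht
  have hc := neg_half_lt_cos_of_mem_Ioo ht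
  have hpi := pi_pos
  have hq : 0 < √(2 * cos t + 1) := sqrt_pos.2 (by linarith)
  have hhalf : 0 < cos (t / 2) := cos_pos_of_mem_Ioo ⟨by linarith [ht.1], by linarith [ht.2]⟩
  -- `(2 - 3m) c + 1` is affine in `m`, with values `2c + 1` and `1 - c` at the endpoints.
  have hN : 0 ≤ (2 - 3 * m) * cos t + 1 := by
    nlinarith [mul_nonneg (sub_nonneg.2 hm.2) (by linarith : (0:ℝ) ≤ 2 * cos t + 1),
      mul_nonneg hm.1 (sub_nonneg.2 (cos_le_one t))]
  rw [(hasDerivAt_oloidP_m m t).deriv, (hasDerivAt_oloidP_t m hc).deriv,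
    cross_oloid_partials_eq_smul m _ _ _ (sin_sq_add_cos_sq t) (sq_sqrt (by linarith))
      (by linarith) hq.ne',
    euclNorm_smul, euclNorm_neg_cos_sin_sqrt (by linarith [ht.1]) (by linarith [ht.2])
      (by linarith), abs_of_nonneg (div_nonneg hN (mul_pos (by linarith) hq).le)]
  have hc1 : cos t + 1 ≠ 0 := by linarith
  have hcos := cos_sq (t / 2)
  rw [show 2 * (t / 2) = t by ring] at hcos
  field_simp
  linear_combination (2 * ((2 - 3 * m) * cos t + 1)) * hcos
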